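/- arXiv:1509.02283 — 3 statements merged into one kernel-verified Lean document; each statement's English description precedes it below -/
import Mathlib

section
/- Let 0 < r < 2, α := 2·arcsin(r/2), and β := 2·arcsin(r/6). Then 0 < β < α < 5β. -/
theorem stmt_2 (r : ℝ) (hr0 : 0 < r) (hr2 : r < 2) :
    0 < 2 * Real.arcsin (r / 6) ∧
    2 * Real.arcsin (r / 6) < 2 * Real.arcsin (r / 2) ∧
    2 * Real.arcsin (r / 2) < 5 * (2 * Real.arcsin (r / 6)) := by
  have hpi : (3.14 : ℝ) < Real.pi := Real.pi_gt_d6.trans_le' (by norm_num)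
  have hpi' : Real.pi < 3.15 := Real.pi_lt_d2
  have h6 : (0:ℝ) < r / 6 := by linarith
  have h6' : r / 6 ≤ 1 := by linarith
  have h2' : r / 2 ≤ 1 := by linarith
  have hpos : 0 < Real.arcsin (r / 6) := Real.arcsin_pos.2 h6
  have hmono : Real.arcsin (r / 6) < Real.arcsin (r / 2) :=
    Real.strictMonoOn_arcsin ⟨by linarith, h6'⟩ ⟨by linarith, h2'⟩ (by linarith)
  refine ⟨by linarith, by linarith, ?_⟩
  -- arcsin (r/6) > r/6 using sin x < x
  have hlow : r / 6 < Real.arcsin (r / 6) := by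
    have := Real.sin_lt hpos
    rwa [Real.sin_arcsin (by linarith) h6'] at this
  -- arcsin (r/2) ≤ (π/2) * (r/2)
  have hup : Real.arcsin (r / 2) ≤ Real.pi / 2 * (r / 2) := by
    rw [Real.arcsin_le_iff_le_sin ⟨by linarith, h2'⟩
      ⟨by nlinarith [Real.pi_pos], by nlinarith [Real.pi_pos]⟩]
    have := Real.mul_le_sin (x := Real.pi / 2 * (r / 2)) (by positivity)
      (by nlinarith [Real.pi_pos])
    calc r / 2 = 2 / Real.pi * (Real.pi / 2 * (r / 2)) := by
          field_simp
      _ ≤ Real.sin (Real.pi / 2 * (r / 2)) := this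
  nlinarith
end

section
/- Let n ≥ 1 and for t ∈ [-π/2, π/2] let Π_t = {x ∈ ℝ^{n+1} : x_{n+1} = sin t}. Then for all s, t ∈ [-π/2, π/2] and every point p ∈ S^n ∩ Π_s, the distance from p to the set S^n ∩ Π_t equals 2·sin(|t - s|/2). -/
theorem stmt_8 (n : ℕ) (hn : 1 ≤ n) (s t : ℝ)
    (hs : s ∈ Set.Icc (-(Real.pi / 2)) (Real.pi / 2))
    (ht : t ∈ Set.Icc (-(Real.pi / 2)) (Real.pi / 2))
    (p : EuclideanSpace ℝ (Fin (n + 1))) (hp : ‖p‖ = 1)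
    (hps : p (Fin.last n) = Real.sin s) :
    Metric.infDist p
      (Metric.sphere (0 : EuclideanSpace ℝ (Fin (n + 1))) 1 ∩
        {x : EuclideanSpace ℝ (Fin (n + 1)) | x (Fin.last n) = Real.sin t}) =
    2 * Real.sin (|t - s| / 2) := by
  obtain ⟨hs1, hs2⟩ := hs
  obtain ⟨ht1, ht2⟩ := ht
  have hπ := Real.pi_pos
  have hcs : 0 ≤ Real.cos s := Real.cos_nonneg_of_mem_Icc ⟨hs1, hs2⟩
  have hct : 0 ≤ Real.cos t := Real.cos_nonneg_of_mem_Icc ⟨ht1, ht2⟩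
  set T := 2 * Real.sin (|t - s| / 2) with hTdef
  have habs : |t - s| ≤ Real.pi := abs_le.2 ⟨by linarith, by linarith⟩
  have hT0 : 0 ≤ T := by
    have := Real.sin_nonneg_of_nonneg_of_le_pi (x := |t - s| / 2) (by positivity) (by linarith)
    linarith
  have hTsq : T ^ 2 = 2 - 2 * Real.cos (t - s) := by
    have h1 : Real.sin (|t - s| / 2) ^ 2 = Real.sin ((t - s) / 2) ^ 2 := by
      rcases abs_cases (t - s) with ⟨h, _⟩ | ⟨h, _⟩
      · rw [h]
      · rw [h, neg_div, Real.sin_neg, neg_sq]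
    have h2 : Real.sin ((t - s) / 2) ^ 2 = 1 / 2 - Real.cos (t - s) / 2 := by
      rw [Real.sin_sq_eq_half_sub, show 2 * ((t - s) / 2) = t - s by ring]
    rw [hTdef, mul_pow, h1, h2]
    ring
  -- sum of squares = 1 ↔ norm = 1
  have hnorm : ∀ q : EuclideanSpace ℝ (Fin (n + 1)),
      (∑ i, q i ^ 2 = 1) → ‖q‖ = 1 := by
    intro q h
    rw [EuclideanSpace.norm_eq]
    simp only [Real.norm_eq_abs, sq_abs]
    rw [h, Real.sqrt_one]
  have hnorm' : ∀ q : EuclideanSpace ℝ (Fin (n + 1)),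
      ‖q‖ = 1 → ∑ i, q i ^ 2 = 1 := by
    intro q h
    have h2 : Real.sqrt (∑ i, ‖q i‖ ^ 2) = 1 := by rw [← EuclideanSpace.norm_eq, h]
    have h3 : ∑ i, ‖q i‖ ^ 2 = 1 := by
      have := Real.sq_sqrt (show (0:ℝ) ≤ ∑ i, ‖q i‖ ^ 2 by positivity)
      rw [h2] at this; linarith
    simpa [Real.norm_eq_abs, sq_abs] using h3
  -- distance formula
  have hdist : ∀ q : EuclideanSpace ℝ (Fin (n + 1)), ‖q‖ = 1 →
      dist p q ^ 2 = 2 - 2 * ∑ i, p i * q i := by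
    intro q hq
    rw [EuclideanSpace.dist_eq, Real.sq_sqrt (by positivity)]
    have h : ∀ i, dist (p i) (q i) ^ 2 = p i ^ 2 - 2 * (p i * q i) + q i ^ 2 := by
      intro i; rw [Real.dist_eq, sq_abs]; ring
    simp_rw [h]
    rw [Finset.sum_add_distrib, Finset.sum_sub_distrib, ← Finset.mul_sum,
      hnorm' p hp, hnorm' q hq]
    ring
  have hps2 : ∑ i : Fin n, p i.castSucc ^ 2 = Real.cos s ^ 2 := by
    have h1 := hnorm' p hp
    rw [Fin.sum_univ_castSucc, hps] at h1
    have h2 := Real.sin_sq_add_cos_sq s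
    linarith
  -- inner product split
  have hsplit : ∀ q : EuclideanSpace ℝ (Fin (n + 1)), q (Fin.last n) = Real.sin t →
      ∑ i, p i * q i = (∑ i : Fin n, p i.castSucc * q i.castSucc) + Real.sin s * Real.sin t := by
    intro q hq
    rw [Fin.sum_univ_castSucc, hps, hq]
  -- final distance lemma for equality case
  have hexact : ∀ q : EuclideanSpace ℝ (Fin (n + 1)), (∑ i, q i ^ 2 = 1) →
      q (Fin.last n) = Real.sin t →
      (∑ i : Fin n, p i.castSucc * q i.castSucc) = Real.cos s * Real.cos t →
      dist p q = T := by
    intro q h1 h2 h3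
    have hq : ‖q‖ = 1 := hnorm q h1
    have hd := hdist q hq
    rw [hsplit q h2, h3] at hd
    have hcos : Real.cos (t - s) = Real.cos t * Real.cos s + Real.sin t * Real.sin s :=
      Real.cos_sub t s
    have h4 : dist p q ^ 2 = T ^ 2 := by rw [hd, hTsq, hcos]; ring
    have h5 := congrArg Real.sqrt h4
    rwa [Real.sqrt_sq dist_nonneg, Real.sqrt_sq hT0] at h5
  -- construct the witness q₀
  obtain ⟨q₀, hq₀1, hq₀2, hq₀3⟩ :
      ∃ q₀ : EuclideanSpace ℝ (Fin (n + 1)), (∑ i, q₀ i ^ 2 = 1) ∧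
        q₀ (Fin.last n) = Real.sin t ∧
        (∑ i : Fin n, p i.castSucc * q₀ i.castSucc) = Real.cos s * Real.cos t := by
    by_cases hc : Real.cos s = 0
    · -- p' = 0
      have hp0 : ∀ i : Fin n, p i.castSucc = 0 := by
        have h0 : ∑ i : Fin n, p i.castSucc ^ 2 = 0 := by rw [hps2, hc]; ring
        intro i
        have := (Finset.sum_eq_zero_iff_of_nonneg
          (fun j _ => sq_nonneg (p j.castSucc))).1 h0 i (Finset.mem_univ i)
        exact pow_eq_zero_iff (by norm_num) |>.1 this
      set i0 : Fin (n + 1) := ⟨0, by omega⟩ with hi0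
      have hne : i0 ≠ Fin.last n := by
        simp only [hi0, Fin.ne_iff_vne, Fin.last]
        omega
      refine ⟨WithLp.toLp 2 (fun i => if i = Fin.last n then Real.sin t else
        if i = i0 then Real.cos t else 0 : Fin (n + 1) → ℝ), ?_, ?_, ?_⟩
      · have hsq : ∀ i : Fin (n + 1),
            (if i = Fin.last n then Real.sin t else if i = i0 then Real.cos t else 0) ^ 2 =
            (if i = Fin.last n then Real.sin t ^ 2 else 0) +
            (if i = i0 then Real.cos t ^ 2 else 0) := by
          intro i
          have hne' : Fin.last n ≠ i0 := hne.symm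
          by_cases h1 : i = Fin.last n
          · have h2 : i ≠ i0 := by rw [h1]; exact hne'
            simp [h1, h2, hne', hne]
          · by_cases h2 : i = i0 <;> simp [h1, h2, hne', hne]
        simp_rw [hsq]
        rw [Finset.sum_add_distrib, Finset.sum_ite_eq' Finset.univ,
          Finset.sum_ite_eq' Finset.univ]
        simp [Real.sin_sq_add_cos_sq]
      · simp
      · have : ∀ i : Fin n, p i.castSucc *
            (if i.castSucc = Fin.last n then Real.sin t else
              if i.castSucc = i0 then Real.cos t else 0) = 0 := by
          intro i; rw [hp0 i]; ring
        rw [Finset.sum_congr rfl (fun i _ => this i)]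
        simp [hc]
    · have hc' : 0 < Real.cos s := lt_of_le_of_ne hcs (Ne.symm hc)
      refine ⟨WithLp.toLp 2 (fun i => if i = Fin.last n then Real.sin t else
        (Real.cos t / Real.cos s) * p i : Fin (n + 1) → ℝ), ?_, ?_, ?_⟩
      · rw [Fin.sum_univ_castSucc]
        have h1 : ∀ i : Fin n,
            (if i.castSucc = Fin.last n then Real.sin t else
              (Real.cos t / Real.cos s) * p i.castSucc) ^ 2 =
            (Real.cos t / Real.cos s) ^ 2 * p i.castSucc ^ 2 := by
          intro i
          rw [if_neg (Fin.castSucc_lt_last i).ne]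
          ring
        rw [Finset.sum_congr rfl (fun i _ => h1 i), ← Finset.mul_sum, hps2]
        have hlast : WithLp.toLp 2 (fun i => if i = Fin.last n then Real.sin t else
            Real.cos t / Real.cos s * p i : Fin (n + 1) → ℝ) (Fin.last n)
            = Real.sin t := by simp
        rw [hlast]
        field_simp
        linarith [Real.sin_sq_add_cos_sq t]

      · simp
      · have h1 : ∀ i : Fin n, p i.castSucc *
            (if i.castSucc = Fin.last n then Real.sin t else
              (Real.cos t / Real.cos s) * p i.castSucc) =
            (Real.cos t / Real.cos s) * p i.castSucc ^ 2 := by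
          intro i
          rw [if_neg (Fin.castSucc_lt_last i).ne]
          ring
        rw [Finset.sum_congr rfl (fun i _ => h1 i), ← Finset.mul_sum, hps2]
        field_simp
  have hq₀norm : ‖q₀‖ = 1 := hnorm q₀ hq₀1
  have hq₀mem : q₀ ∈ Metric.sphere (0 : EuclideanSpace ℝ (Fin (n + 1))) 1 ∩
      {x : EuclideanSpace ℝ (Fin (n + 1)) | x (Fin.last n) = Real.sin t} :=
    ⟨by simpa using hq₀norm, hq₀2⟩
  have hq₀dist : dist p q₀ = T := hexact q₀ hq₀1 hq₀2 hq₀3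
  refine le_antisymm ?_ ?_
  · calc Metric.infDist p _ ≤ dist p q₀ := Metric.infDist_le_dist_of_mem hq₀mem
      _ = T := hq₀dist
  · -- lower bound
    rw [Metric.infDist_eq_iInf]
    haveI : Nonempty ↥(Metric.sphere (0 : EuclideanSpace ℝ (Fin (n + 1))) 1 ∩
        {x : EuclideanSpace ℝ (Fin (n + 1)) | x (Fin.last n) = Real.sin t}) := ⟨⟨q₀, hq₀mem⟩⟩
    refine le_ciInf fun q => ?_
    obtain ⟨q, hq1, hq2⟩ := q
    have hqn : ‖q‖ = 1 := by simpa using hq1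
    have hqt : q (Fin.last n) = Real.sin t := hq2
    have hqs2 : ∑ i : Fin n, (q i.castSucc) ^ 2 = Real.cos t ^ 2 := by
      have h1 := hnorm' q hqn
      rw [Fin.sum_univ_castSucc, hqt] at h1
      have h2 := Real.sin_sq_add_cos_sq t
      linarith
    have hCS := Finset.sum_mul_sq_le_sq_mul_sq (Finset.univ : Finset (Fin n))
      (fun i => p i.castSucc) (fun i => q i.castSucc)
    rw [hps2, hqs2] at hCS
    have hle : (∑ i : Fin n, p i.castSucc * q i.castSucc) ≤ Real.cos s * Real.cos t := by
      nlinarith [mul_nonneg hcs hct]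
    have hd := hdist q hqn
    rw [hsplit q hqt] at hd
    have hcos : Real.cos (t - s) = Real.cos t * Real.cos s + Real.sin t * Real.sin s :=
      Real.cos_sub t s
    have hsq : T ^ 2 ≤ dist p q ^ 2 := by rw [hd, hTsq, hcos]; linarith
    have h5 := Real.sqrt_le_sqrt hsq
    rwa [Real.sqrt_sq dist_nonneg, Real.sqrt_sq hT0] at h5
end

section
/- Let 0 < r < 2 and set α := 2·arcsin(r/2). If s, t ∈ [-π/2, π/2] satisfy |t - s| ≥ α, then every point of S^n ∩ Π_s is at distance at least r from every point of S^n ∩ Π_t, where Π_t = {x ∈ ℝ^{n+1} : x_{n+1} = sin t}. -/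
set_option maxHeartbeats 1000000


theorem stmt_9 (n : ℕ) (r : ℝ) (hr0 : 0 < r) (hr2 : r < 2) (s t : ℝ)
    (hs : s ∈ Set.Icc (-(Real.pi / 2)) (Real.pi / 2))
    (ht : t ∈ Set.Icc (-(Real.pi / 2)) (Real.pi / 2))
    (hst : 2 * Real.arcsin (r / 2) ≤ |t - s|)
    (p q : EuclideanSpace ℝ (Fin (n + 1)))
    (hp : ‖p‖ = 1) (hps : p (Fin.last n) = Real.sin s)
    (hq : ‖q‖ = 1) (hqt : q (Fin.last n) = Real.sin t) :
    r ≤ dist p q := by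
  obtain ⟨hs1, hs2⟩ := hs
  obtain ⟨ht1, ht2⟩ := ht
  have hcs : 0 ≤ Real.cos s := Real.cos_nonneg_of_mem_Icc ⟨hs1, hs2⟩
  have hct : 0 ≤ Real.cos t := Real.cos_nonneg_of_mem_Icc ⟨ht1, ht2⟩
  set p' : EuclideanSpace ℝ (Fin n) := WithLp.toLp 2 (fun i : Fin n => p i.castSucc) with hp'def
  set q' : EuclideanSpace ℝ (Fin n) := WithLp.toLp 2 (fun i : Fin n => q i.castSucc) with hq'def
  have hinner : (inner ℝ p q : ℝ) = (inner ℝ p' q' : ℝ) + Real.sin s * Real.sin t := by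
    simp only [PiLp.inner_apply, RCLike.inner_apply, conj_trivial,
      Fin.sum_univ_castSucc, hps, hqt, hp'def, hq'def]
    ring
  have hpp : (inner ℝ p' p' : ℝ) = Real.cos s ^ 2 := by
    have h1 : (inner ℝ p p : ℝ) = ‖p‖ ^ 2 := real_inner_self_eq_norm_sq p
    rw [hp] at h1
    simp only [PiLp.inner_apply, RCLike.inner_apply, conj_trivial,
      Fin.sum_univ_castSucc, hps] at h1 ⊢
    have := Real.sin_sq_add_cos_sq s
    nlinarith
  have hqq : (inner ℝ q' q' : ℝ) = Real.cos t ^ 2 := by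
    have h1 : (inner ℝ q q : ℝ) = ‖q‖ ^ 2 := real_inner_self_eq_norm_sq q
    rw [hq] at h1
    simp only [PiLp.inner_apply, RCLike.inner_apply, conj_trivial,
      Fin.sum_univ_castSucc, hqt] at h1 ⊢
    have := Real.sin_sq_add_cos_sq t
    nlinarith
  have hnp' : ‖p'‖ = Real.cos s := by
    have h2 : ‖p'‖ ^ 2 = Real.cos s ^ 2 := by rw [← real_inner_self_eq_norm_sq]; exact hpp
    rw [← Real.sqrt_sq (norm_nonneg p'), h2, Real.sqrt_sq hcs]
  have hnq' : ‖q'‖ = Real.cos t := by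
    have h2 : ‖q'‖ ^ 2 = Real.cos t ^ 2 := by rw [← real_inner_self_eq_norm_sq]; exact hqq
    rw [← Real.sqrt_sq (norm_nonneg q'), h2, Real.sqrt_sq hct]
  have hcauchy : (inner ℝ p' q' : ℝ) ≤ Real.cos s * Real.cos t := by
    calc (inner ℝ p' q' : ℝ) ≤ ‖p'‖ * ‖q'‖ := real_inner_le_norm p' q'
    _ = Real.cos s * Real.cos t := by rw [hnp', hnq']
  have hinnerle : (inner ℝ p q : ℝ) ≤ Real.cos (t - s) := by
    rw [hinner, Real.cos_sub]
    linarith [mul_comm (Real.sin s) (Real.sin t)]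
  -- cosine bound from the angle hypothesis
  have hr2' : r / 2 ≤ 1 := by linarith
  have hr0' : 0 ≤ r / 2 := by linarith
  have harcsin : Real.sin (Real.arcsin (r / 2)) = r / 2 :=
    Real.sin_arcsin (by linarith) hr2'
  have habs_le : |t - s| ≤ Real.pi := by
    rw [abs_le]
    constructor <;> linarith
  have hanonneg : 0 ≤ 2 * Real.arcsin (r / 2) :=
    mul_nonneg (by norm_num) (Real.arcsin_nonneg.mpr hr0')
  have hcos1 : Real.cos |t - s| ≤ Real.cos (2 * Real.arcsin (r / 2)) :=
    Real.cos_le_cos_of_nonneg_of_le_pi hanonneg habs_le hst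
  have hcos2 : Real.cos (2 * Real.arcsin (r / 2)) = 1 - r ^ 2 / 2 := by
    rw [Real.cos_two_mul]
    have h3 : Real.sin (Real.arcsin (r/2)) ^ 2 + Real.cos (Real.arcsin (r/2)) ^ 2 = 1 :=
      Real.sin_sq_add_cos_sq _
    rw [harcsin] at h3
    nlinarith
  have hcosts : Real.cos (t - s) ≤ 1 - r ^ 2 / 2 := by
    rw [← Real.cos_abs (t - s)]
    linarith
  have hdist : dist p q ^ 2 = 2 - 2 * (inner ℝ p q : ℝ) := by
    rw [dist_eq_norm, norm_sub_sq_real, hp, hq]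
    ring
  have hfin : r ^ 2 ≤ dist p q ^ 2 := by
    rw [hdist]; linarith
  nlinarith [dist_nonneg (x := p) (y := q)]
end
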